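/- arXiv:1909.13400 — 2 statements merged into one kernel-verified Lean document; each statement's English description precedes it below -/
import Mathlib

section
/- Let f_1, …, f_n : ℝ^p → ℝ with each f_i being μ_i-strongly convex and L_i-smooth, and let u_i⋆ be the global minimizer of f_i. Let W ∈ ℝ^{n×n} be a symmetric doubly stochastic matrix, t ≥ 1 an integer, and let 0 < α ≤ min_i 2/(μ_i+L_i). Set γ = min_i μ_iL_i/(μ_i+L_i) and ν = 2αγ (note 0 < ν ≤ 1). Given local vectors y_1, …, y_n ∈ ℝ^p, define the post-consensus points x_i = ∑_{j=1}^n (W^t)_{ij} y_j. Let g_1, …, g_n : Ω → ℝ^p be random vectors on a probability space with 𝔼[g_i] = ∇f_i(x_i) and 𝔼[‖g_i − ∇f_i(x_i)‖²] ≤ σ² for each i, with g_i and ‖g_i‖² integrable. Then 𝔼[∑_{i=1}^n ‖x_i − α g_i − u_i⋆‖²] ≤ (1 − ν²) ∑_{i=1}^n ‖y_i − u_i⋆‖² + (4/ν) ∑_{i=1}^n ‖u_i⋆‖² + n α² σ². -/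
open MeasureTheory

/-- `f` is `μ`-strongly convex: `x ↦ f x - (μ/2)‖x‖²` is convex on all of `ℝ^p`. -/
def StronglyConvex {p : ℕ} (μ : ℝ) (f : EuclideanSpace ℝ (Fin p) → ℝ) : Prop :=
  ConvexOn ℝ Set.univ (fun x => f x - μ / 2 * ‖x‖ ^ 2)

/-- `f` is `L`-smooth: `f` is differentiable and its gradient is `L`-Lipschitz. -/
def LSmooth {p : ℕ} (L : ℝ) (f : EuclideanSpace ℝ (Fin p) → ℝ) : Prop :=
  Differentiable ℝ f ∧ ∀ x y, ‖gradient f x - gradient f y‖ ≤ L * ‖x - y‖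

/-- `W` is doubly stochastic: nonnegative entries, all row and column sums equal 1. -/
def IsDoublyStochastic {n : ℕ} (W : Matrix (Fin n) (Fin n) ℝ) : Prop :=
  (∀ i j, 0 ≤ W i j) ∧ (∀ i, ∑ j, W i j = 1) ∧ (∀ j, ∑ i, W i j = 1)

/-!
Per agent, the exact gradient step is a contraction towards `u⋆ᵢ` by the factor `1 - 2αγ`:
this is Nesterov's coercivity inequality
`‖∇f x - ∇f y‖² + μL‖x - y‖² ≤ (μ + L)⟪∇f x - ∇f y, x - y⟫`, which follows from the
quadratic lower and upper models of `f` alone by applying cocoercivity to `f - μ/2 ‖·‖²`.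
The stochastic gradient is unbiased, so it only adds its variance `α²σ²`. Mixing with the
doubly stochastic `Wᵗ` is nonexpansive in the stacked norm (Jensen on each row), and the
drift of `u⋆` under `Wᵗ` is split off by Young's inequality with parameter `ν`, so that
`(1 - ν)(1 + ν) = 1 - ν²` and `(1 - ν)(1 + 1/ν) ≤ 1/ν`.
-/

open Set Filter Topology
open scoped RealInnerProductSpace

section FirstOrder

variable {F : Type*} [NormedAddCommGroup F] [InnerProductSpace ℝ F] [CompleteSpace F]
  {f : F → ℝ} {g x d : F}

theorem HasGradientAt.hasDerivAt_comp_add_smul {s : ℝ} (hf : HasGradientAt f g (x + s • d)) :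
    HasDerivAt (fun r : ℝ => f (x + r • d)) ⟪g, d⟫ s := by
  have hline : HasDerivAt (fun r : ℝ => x + r • d) d s := by
    simpa using ((hasDerivAt_id s).smul_const d).const_add x
  have h := (hasGradientAt_iff_hasFDerivAt.1 hf).comp_hasDerivAt s hline
  rw [InnerProductSpace.toDual_apply_apply] at h
  exact h

theorem ConvexOn.add_inner_le_of_hasGradientAt (hf : ConvexOn ℝ univ f)
    (hx : HasGradientAt f g x) (y : F) : f x + ⟪g, y - x⟫ ≤ f y := by
  have hline : ConvexOn ℝ univ fun r : ℝ => f (x + r • (y - x)) := by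
    have hfun : f ∘ AffineMap.lineMap x y = fun r : ℝ => f (x + r • (y - x)) := by
      ext r
      simp [AffineMap.lineMap_apply_module', add_comm]
    simpa [hfun] using hf.comp_affineMap (AffineMap.lineMap x y)
  have hder : HasDerivAt (fun r : ℝ => f (x + r • (y - x))) ⟪g, y - x⟫ 0 :=
    HasGradientAt.hasDerivAt_comp_add_smul (by simpa using hx)
  have := hline.le_slope_of_hasDerivAt (mem_univ 0) (mem_univ 1) one_pos hder
  simp only [slope_def_field, one_smul, add_sub_cancel, zero_smul, add_zero, sub_zero, div_one]
    at this
  linarith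

theorem StrongConvexOn.add_inner_add_sq_le_of_hasGradientAt {μ : ℝ}
    (hf : StrongConvexOn univ μ f) (hx : HasGradientAt f g x) (y : F) :
    f x + ⟪g, y - x⟫ + μ / 2 * ‖y - x‖ ^ 2 ≤ f y := by
  have hgrad : HasGradientAt (fun z => f z - μ / 2 * ‖z‖ ^ 2) (g - μ • x) x := by
    rw [hasGradientAt_iff_hasFDerivAt] at hx ⊢
    refine (hx.sub ((hasStrictFDerivAt_norm_sq x).hasFDerivAt.const_mul (μ / 2))).congr_fderiv ?_
    ext v
    simp only [sub_apply, InnerProductSpace.toDual_apply_apply,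
      smul_apply, coe_innerSL_apply, nsmul_eq_mul, Nat.cast_ofNat, smul_eq_mul,
      map_sub, map_smul]
    ring
  have h := (strongConvexOn_iff_convex.1 hf).add_inner_le_of_hasGradientAt hgrad y
  have hsq := norm_add_sq_real x (y - x)
  rw [add_sub_cancel] at hsq
  rw [inner_sub_left, real_inner_smul_left] at h
  linear_combination h - μ / 2 * hsq

theorem le_add_inner_add_sq_of_lipschitz_gradient {L : ℝ} (hf : Differentiable ℝ f)
    (hL : ∀ a b, ‖gradient f a - gradient f b‖ ≤ L * ‖a - b‖) (x y : F) :
    f y ≤ f x + ⟪gradient f x, y - x⟫ + L / 2 * ‖y - x‖ ^ 2 := by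
  set d := y - x
  have hder (s : ℝ) :
      HasDerivAt (fun r : ℝ => f (x + r • d)) ⟪gradient f (x + s • d), d⟫ s :=
    (hf _).hasGradientAt.hasDerivAt_comp_add_smul
  have hmodel (s : ℝ) :
      HasDerivAt (fun r : ℝ => f x + r * ⟪gradient f x, d⟫ + L / 2 * r ^ 2 * ‖d‖ ^ 2)
        (⟪gradient f x, d⟫ + L * s * ‖d‖ ^ 2) s := by
    refine ((((hasDerivAt_id s).mul_const _).const_add (f x)).add
      (((hasDerivAt_pow 2 s).const_mul (L / 2)).mul_const (‖d‖ ^ 2))).congr_deriv ?_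
    simp only [one_mul, Nat.cast_ofNat]
    ring
  have hbound (s : ℝ) (hs : s ∈ Ico (0 : ℝ) 1) :
      ⟪gradient f (x + s • d), d⟫ ≤ ⟪gradient f x, d⟫ + L * s * ‖d‖ ^ 2 := by
    have := calc ⟪gradient f (x + s • d) - gradient f x, d⟫
        ≤ ‖gradient f (x + s • d) - gradient f x‖ * ‖d‖ := real_inner_le_norm _ _
      _ ≤ L * ‖s • d‖ * ‖d‖ := by gcongr; simpa using hL (x + s • d) x
      _ = L * s * ‖d‖ ^ 2 := by rw [norm_smul, Real.norm_of_nonneg hs.1]; ring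
    rw [inner_sub_left] at this
    linarith
  have := image_le_of_deriv_right_le_deriv_boundary
    (fun s _ => (hder s).continuousAt.continuousWithinAt) (fun s _ => (hder s).hasDerivWithinAt)
    (by simp) (fun s _ => (hmodel s).continuousAt.continuousWithinAt)
    (fun s _ => (hmodel s).hasDerivWithinAt) hbound (right_mem_Icc.2 zero_le_one)
  simpa [d] using this

end FirstOrder

section QuadraticBounds

variable {F : Type*} [NormedAddCommGroup F] [InnerProductSpace ℝ F] {f : F → ℝ} {f' : F → F}

theorem add_inner_add_norm_sq_div_le_of_quadratic_bounds {c : ℝ} (hc : 0 < c)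
    (hlow : ∀ a b, f a + ⟪f' a, b - a⟫ ≤ f b)
    (hup : ∀ a b, f b ≤ f a + ⟪f' a, b - a⟫ + c / 2 * ‖b - a‖ ^ 2) (x y : F) :
    f x + ⟪f' x, y - x⟫ + ‖f' y - f' x‖ ^ 2 / (2 * c) ≤ f y := by
  set v := f' y - f' x
  -- the minimiser of the quadratic upper model of `f` around `y`
  set b := y - c⁻¹ • v
  have hlow' := hlow x b
  have hup' := hup y b
  rw [show b - x = (y - x) - c⁻¹ • v by simp only [b]; abel, inner_sub_right,
    real_inner_smul_right] at hlow'
  rw [show b - y = -(c⁻¹ • v) by simp only [b]; abel, norm_neg, norm_smul, inner_neg_right,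
    real_inner_smul_right, Real.norm_of_nonneg (inv_nonneg.2 hc.le)] at hup'
  have hv : ⟪f' y, v⟫ - ⟪f' x, v⟫ = ‖v‖ ^ 2 := by
    rw [← inner_sub_left, real_inner_self_eq_norm_sq]
  have hquad : c / 2 * (c⁻¹ * ‖v‖) ^ 2 = c⁻¹ * ‖v‖ ^ 2 - ‖v‖ ^ 2 / (2 * c) := by
    field_simp
    ring
  linear_combination hlow' + hup' - c⁻¹ * hv + hquad

theorem norm_sub_sq_le_mul_inner_of_quadratic_bounds {c : ℝ} (hc : 0 < c)
    (hlow : ∀ a b, f a + ⟪f' a, b - a⟫ ≤ f b)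
    (hup : ∀ a b, f b ≤ f a + ⟪f' a, b - a⟫ + c / 2 * ‖b - a‖ ^ 2) (x y : F) :
    ‖f' x - f' y‖ ^ 2 ≤ c * ⟪f' x - f' y, x - y⟫ := by
  have hxy := add_inner_add_norm_sq_div_le_of_quadratic_bounds hc hlow hup x y
  have hyx := add_inner_add_norm_sq_div_le_of_quadratic_bounds hc hlow hup y x
  rw [norm_sub_rev] at hxy
  have hinner : ⟪f' x - f' y, x - y⟫ = -(⟪f' x, y - x⟫ + ⟪f' y, x - y⟫) := by
    rw [← neg_sub x y, inner_neg_right, inner_sub_left]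
    ring
  have hsum : ‖f' x - f' y‖ ^ 2 / c ≤ ⟪f' x - f' y, x - y⟫ := by
    rw [hinner]
    have : ‖f' x - f' y‖ ^ 2 / c = 2 * (‖f' x - f' y‖ ^ 2 / (2 * c)) := by field_simp
    linarith
  rwa [div_le_iff₀ hc, mul_comm] at hsum

theorem coercive_of_quadratic_bounds {μ L : ℝ}
    (hlow : ∀ a b, f a + ⟪f' a, b - a⟫ + μ / 2 * ‖b - a‖ ^ 2 ≤ f b)
    (hup : ∀ a b, f b ≤ f a + ⟪f' a, b - a⟫ + L / 2 * ‖b - a‖ ^ 2) (x y : F) :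
    ‖f' x - f' y‖ ^ 2 + μ * L * ‖x - y‖ ^ 2 ≤ (μ + L) * ⟪f' x - f' y, x - y⟫ := by
  -- Subtracting `μ/2 ‖·‖²` leaves a convex function whose upper model has constant `L - μ`,
  -- to which cocoercivity applies.
  have hshift (κ : ℝ) (a b : F) :
      f a - μ / 2 * ‖a‖ ^ 2 + ⟪f' a - μ • a, b - a⟫ + κ / 2 * ‖b - a‖ ^ 2 =
        f a + ⟪f' a, b - a⟫ + (κ + μ) / 2 * ‖b - a‖ ^ 2 - μ / 2 * ‖b‖ ^ 2 := by
    have hsq := norm_add_sq_real a (b - a)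
    rw [add_sub_cancel] at hsq
    rw [inner_sub_left, real_inner_smul_left, hsq]
    ring
  have hcoco (c : ℝ) (hc : 0 < c) (hcL : L - μ ≤ c) :
      ‖(f' x - μ • x) - (f' y - μ • y)‖ ^ 2 ≤
        c * ⟪(f' x - μ • x) - (f' y - μ • y), x - y⟫ := by
    refine norm_sub_sq_le_mul_inner_of_quadratic_bounds (f := fun z => f z - μ / 2 * ‖z‖ ^ 2)
      (f' := fun z => f' z - μ • z)
      hc (fun a b => ?_) (fun a b => ?_) x y
    · linarith [hshift 0 a b, hlow a b]
    · have := hshift c a b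
      nlinarith [hup a b, sq_nonneg ‖b - a‖]
  have hGd : (f' x - μ • x) - (f' y - μ • y) = (f' x - f' y) - μ • (x - y) := by
    rw [smul_sub]
    abel
  simp only [hGd] at hcoco
  generalize f' x - f' y = G at hcoco ⊢
  generalize x - y = d at hcoco ⊢
  have hnorm : ‖G - μ • d‖ ^ 2 = ‖G‖ ^ 2 - 2 * μ * ⟪G, d⟫ + μ ^ 2 * ‖d‖ ^ 2 := by
    rw [norm_sub_sq_real, norm_smul, mul_pow, Real.norm_eq_abs, sq_abs, real_inner_smul_right]
    ring
  have hinner : ⟪G - μ • d, d⟫ = ⟪G, d⟫ - μ * ‖d‖ ^ 2 := by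
    rw [inner_sub_left, real_inner_smul_left, real_inner_self_eq_norm_sq]
  rcases lt_or_ge μ L with hμL | hLμ
  · have h := hcoco (L - μ) (by linarith) le_rfl
    rw [hnorm, hinner] at h
    linarith
  · -- For `L ≤ μ` cocoercivity holds with every `c > 0`, forcing `f' x - f' y = μ • (x - y)`.
    have hlim : Tendsto (fun c : ℝ => c * ⟪G - μ • d, d⟫) (𝓝[>] 0) (𝓝 0) := by
      simpa using ((continuous_mul_const ⟪G - μ • d, d⟫).tendsto 0).mono_left nhdsWithin_le_nhds
    have hzero : ‖G - μ • d‖ ^ 2 ≤ 0 :=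
      ge_of_tendsto hlim (eventually_mem_nhdsWithin.mono fun c (hc : 0 < c) =>
        hcoco c hc (by linarith))
    have hG : G = μ • d := by
      have := sq_eq_zero_iff.1 (le_antisymm hzero (sq_nonneg _))
      rwa [norm_eq_zero, sub_eq_zero] at this
    rw [hG, norm_smul, mul_pow, Real.norm_eq_abs, sq_abs, real_inner_smul_left,
      real_inner_self_eq_norm_sq]
    exact le_of_eq (by ring)

theorem norm_sub_smul_sq_le_of_coercive {g d : F} {μ L α γ : ℝ}
    (hco : ‖g‖ ^ 2 + μ * L * ‖d‖ ^ 2 ≤ (μ + L) * ⟪g, d⟫)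
    (hα0 : 0 < α) (hα : α ≤ 2 / (μ + L)) (hγ : γ ≤ μ * L / (μ + L)) :
    ‖d - α • g‖ ^ 2 ≤ (1 - 2 * α * γ) * ‖d‖ ^ 2 := by
  have hS : 0 < μ + L := by
    by_contra! h
    linarith [div_nonpos_of_nonneg_of_nonpos zero_le_two h]
  rw [le_div_iff₀ hS] at hα hγ
  rw [norm_sub_sq_real, norm_smul, mul_pow, Real.norm_eq_abs, sq_abs, real_inner_smul_right,
    real_inner_comm]
  nlinarith [mul_le_mul_of_nonneg_left hco hα0.le, mul_le_mul_of_nonneg_right hα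
    (mul_nonneg hα0.le (sq_nonneg ‖g‖)), mul_le_mul_of_nonneg_left hγ
    (mul_nonneg hα0.le (sq_nonneg ‖d‖))]

end QuadraticBounds

section GradientStep

variable {F : Type*} [NormedAddCommGroup F] [InnerProductSpace ℝ F] [CompleteSpace F]
  {f : F → ℝ}

theorem norm_sub_smul_gradient_sub_sq_le {μ L α γ : ℝ} (hsc : StrongConvexOn univ μ f)
    (hf : Differentiable ℝ f) (hL : ∀ a b, ‖gradient f a - gradient f b‖ ≤ L * ‖a - b‖)
    {u : F} (hu : gradient f u = 0) (hα0 : 0 < α) (hα : α ≤ 2 / (μ + L))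
    (hγ : γ ≤ μ * L / (μ + L)) (x : F) :
    ‖x - α • gradient f x - u‖ ^ 2 ≤ (1 - 2 * α * γ) * ‖x - u‖ ^ 2 := by
  have hco := coercive_of_quadratic_bounds
    (fun a b => hsc.add_inner_add_sq_le_of_hasGradientAt (hf a).hasGradientAt b)
    (le_add_inner_add_sq_of_lipschitz_gradient hf hL) x u
  rw [hu, sub_zero] at hco
  rw [sub_right_comm]
  exact norm_sub_smul_sq_le_of_coercive hco hα0 hα hγ

end GradientStep

section Consensus

open Matrix

variable {ι E : Type*} [Fintype ι] [DecidableEq ι]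

theorem isDoublyStochastic_iff_mem_doublyStochastic {n : ℕ} {W : Matrix (Fin n) (Fin n) ℝ} :
    IsDoublyStochastic W ↔ W ∈ doublyStochastic ℝ (Fin n) :=
  mem_doublyStochastic_iff_sum.symm

theorem norm_add_sq_le_of_pos [SeminormedAddCommGroup E] {ε : ℝ} (hε : 0 < ε) (a b : E) :
    ‖a + b‖ ^ 2 ≤ (1 + ε) * ‖a‖ ^ 2 + (1 + 1 / ε) * ‖b‖ ^ 2 := by
  have hsq : ‖a + b‖ ^ 2 ≤ (‖a‖ + ‖b‖) ^ 2 := by gcongr; exact norm_add_le a b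
  have hgap : (1 + ε) * ‖a‖ ^ 2 + (1 + 1 / ε) * ‖b‖ ^ 2 - (‖a‖ + ‖b‖) ^ 2 =
      (ε * ‖a‖ - ‖b‖) ^ 2 / ε := by
    field_simp
    ring
  have : 0 ≤ (ε * ‖a‖ - ‖b‖) ^ 2 / ε := by positivity
  linarith

variable [NormedAddCommGroup E] [InnerProductSpace ℝ E] {M : Matrix ι ι ℝ}

theorem sum_norm_sq_sum_smul_le (hM : M ∈ doublyStochastic ℝ ι) (z : ι → E) :
    ∑ i, ‖∑ j, M i j • z j‖ ^ 2 ≤ ∑ j, ‖z j‖ ^ 2 := by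
  have hconv : ConvexOn ℝ univ fun v : E => ‖v‖ ^ 2 :=
    (convexOn_norm convex_univ).pow (fun _ _ => norm_nonneg _) 2
  calc ∑ i, ‖∑ j, M i j • z j‖ ^ 2 ≤ ∑ i, ∑ j, M i j * ‖z j‖ ^ 2 :=
        Finset.sum_le_sum fun i _ => hconv.map_sum_le
          (fun j _ => nonneg_of_mem_doublyStochastic hM) (sum_row_of_mem_doublyStochastic hM i)
          (fun _ _ => mem_univ _)
    _ = ∑ j, ‖z j‖ ^ 2 := by
        rw [Finset.sum_comm]
        simp_rw [← Finset.sum_mul, sum_col_of_mem_doublyStochastic hM, one_mul]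

theorem sum_norm_sum_smul_sub_sq_le (hM : M ∈ doublyStochastic ℝ ι) (y u : ι → E) {ε : ℝ}
    (hε : 0 < ε) :
    ∑ i, ‖∑ j, M i j • y j - u i‖ ^ 2 ≤
      (1 + ε) * ∑ i, ‖y i - u i‖ ^ 2 + 4 * (1 + 1 / ε) * ∑ i, ‖u i‖ ^ 2 := by
  have hsplit (i : ι) : ∑ j, M i j • y j - u i =
      ∑ j, M i j • (y j - u j) + (∑ j, M i j • u j - u i) := by
    simp only [smul_sub, Finset.sum_sub_distrib]
    abel
  have hdrift : ∑ i, ‖∑ j, M i j • u j - u i‖ ^ 2 ≤ 4 * ∑ i, ‖u i‖ ^ 2 := by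
    calc ∑ i, ‖∑ j, M i j • u j - u i‖ ^ 2
        ≤ ∑ i, (2 * ‖∑ j, M i j • u j‖ ^ 2 + 2 * ‖u i‖ ^ 2) :=
          Finset.sum_le_sum fun i _ => by
            simpa [sub_eq_add_neg, one_add_one_eq_two] using
              norm_add_sq_le_of_pos one_pos (∑ j, M i j • u j) (-u i)
      _ = 2 * ∑ i, ‖∑ j, M i j • u j‖ ^ 2 + 2 * ∑ i, ‖u i‖ ^ 2 := by
          rw [Finset.sum_add_distrib, Finset.mul_sum, Finset.mul_sum]
      _ ≤ 4 * ∑ i, ‖u i‖ ^ 2 := by linarith [sum_norm_sq_sum_smul_le hM u]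
  calc ∑ i, ‖∑ j, M i j • y j - u i‖ ^ 2
      ≤ ∑ i, ((1 + ε) * ‖∑ j, M i j • (y j - u j)‖ ^ 2 +
          (1 + 1 / ε) * ‖∑ j, M i j • u j - u i‖ ^ 2) :=
        Finset.sum_le_sum fun i _ => hsplit i ▸
          norm_add_sq_le_of_pos hε (∑ j, M i j • (y j - u j)) (∑ j, M i j • u j - u i)
    _ = (1 + ε) * ∑ i, ‖∑ j, M i j • (y j - u j)‖ ^ 2 +
          (1 + 1 / ε) * ∑ i, ‖∑ j, M i j • u j - u i‖ ^ 2 := by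
        rw [Finset.sum_add_distrib, Finset.mul_sum, Finset.mul_sum]
    _ ≤ (1 + ε) * ∑ i, ‖y i - u i‖ ^ 2 + (1 + 1 / ε) * (4 * ∑ i, ‖u i‖ ^ 2) := by
        gcongr _ * ?_ + _ * ?_
        exact sum_norm_sq_sum_smul_le hM (fun j => y j - u j)
    _ = _ := by ring

end Consensus

section Stochastic

variable {Ω E : Type*} [MeasurableSpace Ω] {P : Measure Ω} [IsProbabilityMeasure P]
  [NormedAddCommGroup E] [InnerProductSpace ℝ E] [CompleteSpace E]

theorem integral_norm_add_sq_of_integral_eq_zero {X : Ω → E} (hX : MemLp X 2 P)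
    (hX0 : ∫ ω, X ω ∂P = 0) (a : E) :
    ∫ ω, ‖a + X ω‖ ^ 2 ∂P = ‖a‖ ^ 2 + ∫ ω, ‖X ω‖ ^ 2 ∂P := by
  have hint := hX.integrable one_le_two
  simp_rw [norm_add_sq_real]
  have hcross : Integrable (fun ω => 2 * ⟪a, X ω⟫) P := (hint.const_inner a).const_mul 2
  have hlin : Integrable (fun ω => ‖a‖ ^ 2 + 2 * ⟪a, X ω⟫) P := (integrable_const _).add hcross
  rw [integral_add hlin (hX.integrable_norm_pow' (p := 2)),
    integral_add (integrable_const _) hcross, integral_const_mul, integral_inner hint, hX0]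
  simp

theorem integral_norm_sub_smul_sub_sq_le {G : Ω → E} (hG : MemLp G 2 P) {m : E}
    (hm : ∫ ω, G ω ∂P = m) {σ : ℝ} (hvar : ∫ ω, ‖G ω - m‖ ^ 2 ∂P ≤ σ ^ 2) (a b : E) (α : ℝ) :
    ∫ ω, ‖a - α • G ω - b‖ ^ 2 ∂P ≤ ‖a - α • m - b‖ ^ 2 + α ^ 2 * σ ^ 2 := by
  have hnoise : MemLp (fun ω => α • (m - G ω)) 2 P := ((memLp_const m).sub hG).const_smul α
  have hmean : ∫ ω, α • (m - G ω) ∂P = 0 := by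
    rw [integral_smul, integral_sub (integrable_const m) (hG.integrable one_le_two), hm]
    simp
  have hsplit (ω : Ω) : a - α • G ω - b = (a - α • m - b) + α • (m - G ω) := by
    rw [smul_sub]
    abel
  simp_rw [hsplit]
  rw [integral_norm_add_sq_of_integral_eq_zero hnoise hmean]
  simp_rw [norm_smul, mul_pow, Real.norm_eq_abs, sq_abs, norm_sub_rev m]
  rw [integral_const_mul]
  gcongr

end Stochastic

theorem one_sub_mul_le_one_sub_sq_mul_add_div_mul {ν A B S : ℝ} (hν0 : 0 < ν) (hν1 : ν ≤ 1)
    (hB : 0 ≤ B) (hS : S ≤ (1 + ν) * A + 4 * (1 + 1 / ν) * B) :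
    (1 - ν) * S ≤ (1 - ν ^ 2) * A + 4 / ν * B := by
  have hcoef : (1 - ν) * (4 * (1 + 1 / ν)) ≤ 4 / ν := by
    field_simp
    nlinarith
  calc (1 - ν) * S ≤ (1 - ν) * ((1 + ν) * A + 4 * (1 + 1 / ν) * B) := by gcongr
    _ = (1 - ν ^ 2) * A + (1 - ν) * (4 * (1 + 1 / ν)) * B := by ring
    _ ≤ (1 - ν ^ 2) * A + 4 / ν * B := by gcongr

theorem near_dgd_one_step_bound_general {n p : ℕ}
    (f : Fin n → EuclideanSpace ℝ (Fin p) → ℝ) (μ L : Fin n → ℝ)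
    (hsc : ∀ i, StronglyConvex (μ i) (f i))
    (hsm : ∀ i, LSmooth (L i) (f i))
    (ustar : Fin n → EuclideanSpace ℝ (Fin p))
    (hmin : ∀ i x, f i (ustar i) ≤ f i x)
    (W : Matrix (Fin n) (Fin n) ℝ) (hds : IsDoublyStochastic W)
    (t : ℕ)
    (α : ℝ) (hα0 : 0 < α) (hα : ∀ i, α ≤ 2 / (μ i + L i))
    (γ : ℝ) (hγ : IsLeast (Set.range fun i => μ i * L i / (μ i + L i)) γ)
    (ν : ℝ) (hν : ν = 2 * α * γ) (hν0 : 0 < ν) (hν1 : ν ≤ 1)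
    (y : Fin n → EuclideanSpace ℝ (Fin p))
    (x : Fin n → EuclideanSpace ℝ (Fin p))
    (hx : ∀ i, x i = ∑ j, (W ^ t) i j • y j)
    {Ω : Type*} [MeasureSpace Ω] [IsProbabilityMeasure (volume : Measure Ω)]
    (g : Fin n → Ω → EuclideanSpace ℝ (Fin p))
    (hg_int : ∀ i, Integrable (g i))
    (hg_sq_int : ∀ i, Integrable (fun ω => ‖g i ω‖ ^ 2))
    (hunbiased : ∀ i, (∫ ω, g i ω) = gradient (f i) (x i))
    (σ : ℝ)
    (hvar : ∀ i, (∫ ω, ‖g i ω - gradient (f i) (x i)‖ ^ 2) ≤ σ ^ 2) :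
    (∫ ω, ∑ i, ‖x i - α • g i ω - ustar i‖ ^ 2) ≤
      (1 - ν ^ 2) * ∑ i, ‖y i - ustar i‖ ^ 2 +
        (4 / ν) * ∑ i, ‖ustar i‖ ^ 2 + n * α ^ 2 * σ ^ 2 := by
  have hg : ∀ i, MemLp (g i) 2 :=
    fun i => (memLp_two_iff_integrable_sq_norm (hg_int i).1).2 (hg_sq_int i)
  have hcrit (i : Fin n) : gradient (f i) (ustar i) = 0 := by
    have hloc : IsLocalMin (f i) (ustar i) := Eventually.of_forall (hmin i)
    rw [gradient, hloc.fderiv_eq_zero, map_zero]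
  have hcontract (i : Fin n) :
      ‖x i - α • gradient (f i) (x i) - ustar i‖ ^ 2 ≤ (1 - ν) * ‖x i - ustar i‖ ^ 2 :=
    hν ▸ norm_sub_smul_gradient_sub_sq_le (strongConvexOn_iff_convex.2 (hsc i)) (hsm i).1
      (hsm i).2 (hcrit i) hα0 (hα i) (hγ.2 ⟨i, rfl⟩) (x i)
  have hstep (i : Fin n) : ∫ ω, ‖x i - α • g i ω - ustar i‖ ^ 2 ≤
      (1 - ν) * ‖x i - ustar i‖ ^ 2 + α ^ 2 * σ ^ 2 := by
    linarith [integral_norm_sub_smul_sub_sq_le (hg i) (hunbiased i) (hvar i) (x i) (ustar i) α,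
      hcontract i]
  have hconsensus := sum_norm_sum_smul_sub_sq_le
    (pow_mem (isDoublyStochastic_iff_mem_doublyStochastic.1 hds) t) y ustar hν0
  simp only [← hx] at hconsensus
  have hint (i : Fin n) : Integrable fun ω => ‖x i - α • g i ω - ustar i‖ ^ 2 :=
    (((memLp_const (x i)).sub ((hg i).const_smul α)).sub (memLp_const _)).integrable_norm_pow'
  rw [integral_finsetSum _ fun i _ => hint i]
  calc ∑ i, ∫ ω, ‖x i - α • g i ω - ustar i‖ ^ 2
      ≤ ∑ i, ((1 - ν) * ‖x i - ustar i‖ ^ 2 + α ^ 2 * σ ^ 2) :=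
        Finset.sum_le_sum fun i _ => hstep i
    _ = (1 - ν) * ∑ i, ‖x i - ustar i‖ ^ 2 + n * α ^ 2 * σ ^ 2 := by
        rw [Finset.sum_add_distrib, Finset.mul_sum, Finset.sum_const, Finset.card_univ,
          Fintype.card_fin, nsmul_eq_mul, mul_assoc]
    _ ≤ (1 - ν ^ 2) * ∑ i, ‖y i - ustar i‖ ^ 2 + 4 / ν * ∑ i, ‖ustar i‖ ^ 2
          + n * α ^ 2 * σ ^ 2 := by
        gcongr
        exact one_sub_mul_le_one_sub_sq_mul_add_div_mul hν0 hν1 (by positivity) hconsensus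

/-- One-step bound for the stochastic NEAR-DGD^t method:
`𝔼[∑ᵢ ‖xᵢ − αgᵢ − uᵢ⋆‖²] ≤ (1 − ν²)∑ᵢ‖yᵢ − uᵢ⋆‖² + (4/ν)∑ᵢ‖uᵢ⋆‖² + nα²σ²`. -/
theorem near_dgd_one_step_bound {n p : ℕ}
    (f : Fin n → EuclideanSpace ℝ (Fin p) → ℝ) (μ L : Fin n → ℝ)
    (hμpos : ∀ i, 0 < μ i)
    (hsc : ∀ i, StronglyConvex (μ i) (f i))
    (hsm : ∀ i, LSmooth (L i) (f i))
    (ustar : Fin n → EuclideanSpace ℝ (Fin p))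
    (hmin : ∀ i x, f i (ustar i) ≤ f i x)
    (W : Matrix (Fin n) (Fin n) ℝ) (hsymm : W.IsSymm) (hds : IsDoublyStochastic W)
    (t : ℕ) (ht : 1 ≤ t)
    (α : ℝ) (hα0 : 0 < α) (hα : ∀ i, α ≤ 2 / (μ i + L i))
    (γ : ℝ) (hγ : IsLeast (Set.range fun i => μ i * L i / (μ i + L i)) γ)
    (ν : ℝ) (hν : ν = 2 * α * γ) (hν0 : 0 < ν) (hν1 : ν ≤ 1)
    (y : Fin n → EuclideanSpace ℝ (Fin p))
    (x : Fin n → EuclideanSpace ℝ (Fin p))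
    (hx : ∀ i, x i = ∑ j, (W ^ t) i j • y j)
    {Ω : Type*} [MeasureSpace Ω] [IsProbabilityMeasure (volume : Measure Ω)]
    (g : Fin n → Ω → EuclideanSpace ℝ (Fin p))
    (hg_int : ∀ i, Integrable (g i))
    (hg_sq_int : ∀ i, Integrable (fun ω => ‖g i ω‖ ^ 2))
    (hunbiased : ∀ i, (∫ ω, g i ω) = gradient (f i) (x i))
    (σ : ℝ) (hσ : 0 < σ)
    (hvar : ∀ i, (∫ ω, ‖g i ω - gradient (f i) (x i)‖ ^ 2) ≤ σ ^ 2) :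
    (∫ ω, ∑ i, ‖x i - α • g i ω - ustar i‖ ^ 2) ≤
      (1 - ν ^ 2) * ∑ i, ‖y i - ustar i‖ ^ 2 +
        (4 / ν) * ∑ i, ‖ustar i‖ ^ 2 + n * α ^ 2 * σ ^ 2 :=
  near_dgd_one_step_bound_general f μ L hsc hsm ustar hmin W hds t α hα0 hα γ hγ ν hν hν0 hν1 y x hx
    g hg_int hg_sq_int hunbiased σ hvar
end

section
/- Let f_1, …, f_n : ℝ^p → ℝ be differentiable functions whose gradients ∇f_i are L_i-Lipschitz, and set L = max_i L_i. Let W ∈ ℝ^{n×n} be a doubly stochastic matrix, t ≥ 1 an integer, and β = ‖W − (1/n)1_n1_n^T‖ the ℓ2 operator norm of W minus the averaging matrix. Given y_1, …, y_n ∈ ℝ^p, define x_i = ∑_{j=1}^n (W^t)_{ij} y_j and ȳ = (1/n)∑_{j=1}^n y_j. Then ‖(1/n)∑_{i=1}^n (∇f_i(x_i) − ∇f_i(ȳ))‖² ≤ β^{2t} L² ∑_{j=1}^n ‖y_j‖². -/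
/-- The ℓ2 operator norm of a square real matrix. -/
noncomputable def l2OpNorm {n : ℕ} (A : Matrix (Fin n) (Fin n) ℝ) : ℝ :=
  ‖(Matrix.toEuclideanCLM (𝕜 := ℝ) A :
      EuclideanSpace ℝ (Fin n) →L[ℝ] EuclideanSpace ℝ (Fin n))‖

open Finset

theorem sub_pow_eq_pow_sub_of_absorbing {R : Type*} [Ring R] {w j : R}
    (hj : IsIdempotentElem j) (hwj : w * j = j) (hjw : j * w = j) {t : ℕ} (ht : 0 < t) :
    (w - j) ^ t = w ^ t - j := by
  have hjw_pow : ∀ s : ℕ, j * w ^ s = j := by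
    intro s
    induction s with
    | zero => simp
    | succ s ih => rw [pow_succ, ← mul_assoc, ih, hjw]
  induction t, ht using Nat.le_induction with
  | base => simp
  | succ s _ ih =>
    rw [pow_succ', ih, sub_mul, mul_sub, mul_sub, ← pow_succ', hwj, hjw_pow, hj.eq]
    abel

/-- The paper's averaging matrix `(1/n) 𝟙 𝟙ᵀ`. -/
noncomputable def averagingMatrix (n : ℕ) : Matrix (Fin n) (Fin n) ℝ :=
  Matrix.of fun _ _ => 1 / n

theorem isIdempotentElem_averagingMatrix (n : ℕ) : IsIdempotentElem (averagingMatrix n) := by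
  ext i j
  have hn : (n : ℝ) ≠ 0 := by exact_mod_cast i.pos.ne'
  simp [averagingMatrix, Matrix.mul_apply]
  field_simp

theorem mul_averagingMatrix_of_row_sum_eq_one {n : ℕ} {W : Matrix (Fin n) (Fin n) ℝ}
    (hrow : ∀ i, ∑ j, W i j = 1) : W * averagingMatrix n = averagingMatrix n := by
  ext i j
  simp only [averagingMatrix, Matrix.mul_apply, Matrix.of_apply, ← sum_mul, hrow, one_mul]

theorem averagingMatrix_mul_of_col_sum_eq_one {n : ℕ} {W : Matrix (Fin n) (Fin n) ℝ}
    (hcol : ∀ j, ∑ i, W i j = 1) : averagingMatrix n * W = averagingMatrix n := by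
  ext i j
  simp only [averagingMatrix, Matrix.mul_apply, Matrix.of_apply, ← mul_sum, hcol, mul_one]

theorem IsDoublyStochastic.pow_sub_averagingMatrix {n : ℕ} {W : Matrix (Fin n) (Fin n) ℝ}
    (hW : IsDoublyStochastic W) {t : ℕ} (ht : 0 < t) :
    W ^ t - averagingMatrix n = (W - averagingMatrix n) ^ t :=
  (sub_pow_eq_pow_sub_of_absorbing (isIdempotentElem_averagingMatrix n)
    (mul_averagingMatrix_of_row_sum_eq_one hW.2.1)
    (averagingMatrix_mul_of_col_sum_eq_one hW.2.2) ht).symm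

theorem sum_norm_sq_sum_smul_le_s11 {𝕜 ι κ : Type*} [RCLike 𝕜] [Fintype ι] [DecidableEq ι]
    [Fintype κ] (A : Matrix ι ι 𝕜) (v : ι → EuclideanSpace 𝕜 κ) :
    ∑ i, ‖∑ j, A i j • v j‖ ^ 2 ≤ ‖Matrix.toEuclideanCLM (𝕜 := 𝕜) A‖ ^ 2 * ∑ j, ‖v j‖ ^ 2 := by
  set T := Matrix.toEuclideanCLM (𝕜 := 𝕜) A
  -- `∑ᵢ ‖∑ⱼ Aᵢⱼ vⱼ‖²` is `∑ₖ ‖A (column k)‖²`: apply `A` to one coordinate of the `vⱼ` at a time.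
  let column : κ → EuclideanSpace 𝕜 ι := fun k => WithLp.toLp 2 fun j => v j k
  have hT : ∀ k, ‖T (column k)‖ ^ 2 = ∑ i, ‖(∑ j, A i j • v j) k‖ ^ 2 := by
    intro k
    simp [T, column, EuclideanSpace.norm_sq_eq, Matrix.mulVec, dotProduct]
  calc ∑ i, ‖∑ j, A i j • v j‖ ^ 2 = ∑ k, ‖T (column k)‖ ^ 2 := by
        simp only [hT, EuclideanSpace.norm_sq_eq (∑ j, _)]
        exact sum_comm
    _ ≤ ∑ k, ‖T‖ ^ 2 * ‖column k‖ ^ 2 := by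
        gcongr with k
        rw [← mul_pow]
        gcongr
        exact T.le_opNorm _
    _ = ‖T‖ ^ 2 * ∑ j, ‖v j‖ ^ 2 := by
        simp only [← mul_sum, column, EuclideanSpace.norm_sq_eq]
        rw [sum_comm]

theorem l2OpNorm_pow_le {n : ℕ} (A : Matrix (Fin n) (Fin n) ℝ) {t : ℕ} (ht : 0 < t) :
    l2OpNorm (A ^ t) ≤ l2OpNorm A ^ t := by
  rw [l2OpNorm, map_pow]
  exact norm_pow_le' _ ht

theorem norm_inv_card_smul_sum_sq_le {E : Type*} [SeminormedAddCommGroup E] [NormedSpace ℝ E]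
    {ι : Type*} (s : Finset ι) (g : ι → E) :
    ‖(#s : ℝ)⁻¹ • ∑ i ∈ s, g i‖ ^ 2 ≤ (#s : ℝ)⁻¹ * ∑ i ∈ s, ‖g i‖ ^ 2 := by
  rcases s.eq_empty_or_nonempty with rfl | hs
  · simp
  have hcard : (0 : ℝ) < #s := by exact_mod_cast hs.card_pos
  calc ‖(#s : ℝ)⁻¹ • ∑ i ∈ s, g i‖ ^ 2 = (#s : ℝ)⁻¹ ^ 2 * ‖∑ i ∈ s, g i‖ ^ 2 := by
        rw [norm_smul, mul_pow, Real.norm_of_nonneg (by positivity)]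
    _ ≤ (#s : ℝ)⁻¹ ^ 2 * (#s * ∑ i ∈ s, ‖g i‖ ^ 2) := by
        gcongr
        exact (pow_le_pow_left₀ (norm_nonneg _) (norm_sum_le _ _) 2).trans
          (sq_sum_le_card_mul_sum_sq ..)
    _ = (#s : ℝ)⁻¹ * ∑ i ∈ s, ‖g i‖ ^ 2 := by field_simp

theorem IsDoublyStochastic.sum_norm_sq_sub_average_le {n p : ℕ} {W : Matrix (Fin n) (Fin n) ℝ}
    (hW : IsDoublyStochastic W) {t : ℕ} (ht : 0 < t) (y : Fin n → EuclideanSpace ℝ (Fin p)) :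
    ∑ i, ‖∑ j, (W ^ t) i j • y j - (1 / (n : ℝ)) • ∑ j, y j‖ ^ 2 ≤
      l2OpNorm (W - averagingMatrix n) ^ (2 * t) * ∑ j, ‖y j‖ ^ 2 := by
  have hdev : ∀ i, ∑ j, (W ^ t) i j • y j - (1 / (n : ℝ)) • ∑ j, y j =
      ∑ j, ((W - averagingMatrix n) ^ t) i j • y j := by
    intro i
    rw [smul_sum, ← sum_sub_distrib, ← hW.pow_sub_averagingMatrix ht]
    simp only [Matrix.sub_apply, sub_smul, averagingMatrix, Matrix.of_apply]
  calc _ = ∑ i, ‖∑ j, ((W - averagingMatrix n) ^ t) i j • y j‖ ^ 2 := by simp only [hdev]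
    _ ≤ l2OpNorm ((W - averagingMatrix n) ^ t) ^ 2 * ∑ j, ‖y j‖ ^ 2 :=
        sum_norm_sq_sum_smul_le_s11 _ y
    _ ≤ (l2OpNorm (W - averagingMatrix n) ^ t) ^ 2 * ∑ j, ‖y j‖ ^ 2 := by
        gcongr
        · exact norm_nonneg _
        · exact l2OpNorm_pow_le _ ht
    _ = l2OpNorm (W - averagingMatrix n) ^ (2 * t) * ∑ j, ‖y j‖ ^ 2 := by ring

theorem average_gradient_deviation_bound_general {n p : ℕ}
    (f : Fin n → EuclideanSpace ℝ (Fin p) → ℝ)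
    (Li : Fin n → ℝ)
    (hlip : ∀ i x y, ‖gradient (f i) x - gradient (f i) y‖ ≤ Li i * ‖x - y‖)
    (L : ℝ) (hL : IsGreatest (Set.range Li) L)
    (W : Matrix (Fin n) (Fin n) ℝ) (hds : IsDoublyStochastic W)
    (t : ℕ) (ht : 1 ≤ t)
    (β : ℝ) (hβ : β = l2OpNorm (W - Matrix.of fun _ _ => (1 : ℝ) / n))
    (y : Fin n → EuclideanSpace ℝ (Fin p))
    (x : Fin n → EuclideanSpace ℝ (Fin p))
    (hx : ∀ i, x i = ∑ j, (W ^ t) i j • y j)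
    (ybar : EuclideanSpace ℝ (Fin p)) (hybar : ybar = (1 / (n : ℝ)) • ∑ j, y j) :
    ‖(1 / (n : ℝ)) • ∑ i, (gradient (f i) (x i) - gradient (f i) ybar)‖ ^ 2 ≤
      β ^ (2 * t) * L ^ 2 * ∑ j, ‖y j‖ ^ 2 := by
  set g := fun i => gradient (f i) (x i) - gradient (f i) ybar
  have hgrad : ∀ i, ‖g i‖ ^ 2 ≤ L ^ 2 * ‖x i - ybar‖ ^ 2 := by
    intro i
    rw [← mul_pow]
    gcongr
    exact (hlip i _ _).trans (by gcongr; exact hL.2 ⟨i, rfl⟩)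
  have hconsensus : ∑ i, ‖x i - ybar‖ ^ 2 ≤ β ^ (2 * t) * ∑ j, ‖y j‖ ^ 2 := by
    rw [hβ, hybar]
    simp only [hx]
    exact hds.sum_norm_sq_sub_average_le ht y
  calc ‖(1 / (n : ℝ)) • ∑ i, g i‖ ^ 2 ≤ (1 / (n : ℝ)) * ∑ i, ‖g i‖ ^ 2 := by
        simpa using norm_inv_card_smul_sum_sq_le univ g
    _ ≤ ∑ i, ‖g i‖ ^ 2 :=
        mul_le_of_le_one_left (by positivity) (by simpa using Nat.cast_inv_le_one n)
    _ ≤ ∑ i, L ^ 2 * ‖x i - ybar‖ ^ 2 := sum_le_sum fun i _ => hgrad i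
    _ = L ^ 2 * ∑ i, ‖x i - ybar‖ ^ 2 := (mul_sum ..).symm
    _ ≤ L ^ 2 * (β ^ (2 * t) * ∑ j, ‖y j‖ ^ 2) := by gcongr
    _ = β ^ (2 * t) * L ^ 2 * ∑ j, ‖y j‖ ^ 2 := by ring

/-- Bound on the deviation between the average of local gradients at the local
iterates and the gradient of the average function at the average iterate:
`‖(1/n)∑ᵢ(∇fᵢ(xᵢ) − ∇fᵢ(ȳ))‖² ≤ β^{2t} L² ∑ⱼ‖yⱼ‖²`. -/
theorem average_gradient_deviation_bound {n p : ℕ} (hn : 0 < n)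
    (f : Fin n → EuclideanSpace ℝ (Fin p) → ℝ)
    (Li : Fin n → ℝ)
    (hdiff : ∀ i, Differentiable ℝ (f i))
    (hlip : ∀ i x y, ‖gradient (f i) x - gradient (f i) y‖ ≤ Li i * ‖x - y‖)
    (L : ℝ) (hL : IsGreatest (Set.range Li) L)
    (W : Matrix (Fin n) (Fin n) ℝ) (hds : IsDoublyStochastic W)
    (t : ℕ) (ht : 1 ≤ t)
    (β : ℝ) (hβ : β = l2OpNorm (W - Matrix.of fun _ _ => (1 : ℝ) / n))
    (y : Fin n → EuclideanSpace ℝ (Fin p))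
    (x : Fin n → EuclideanSpace ℝ (Fin p))
    (hx : ∀ i, x i = ∑ j, (W ^ t) i j • y j)
    (ybar : EuclideanSpace ℝ (Fin p)) (hybar : ybar = (1 / (n : ℝ)) • ∑ j, y j) :
    ‖(1 / (n : ℝ)) • ∑ i, (gradient (f i) (x i) - gradient (f i) ybar)‖ ^ 2 ≤
      β ^ (2 * t) * L ^ 2 * ∑ j, ‖y j‖ ^ 2 :=
  average_gradient_deviation_bound_general f Li hlip L hL W hds t ht β hβ y x hx ybar hybar
end
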